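/- There exists a trace for which the strong schedulable happens-before relation does not exist, i.e., no partial order on its events satisfies PO, RAD, and StrongWRD. Concretely, the trace T = [thread 1: rd(y) at position 1, thread 1: wr(x) at position 2, thread 2: rd(x) at position 3, thread 2: wr(y) at position 4] has W(rd(y)@1) = {wr(y)@4} and W(rd(x)@3) = {wr(x)@2}, and any relation satisfying PO and StrongWRD contains the cycle rd(y)@1 → wr(x)@2 → rd(x)@3 → wr(y)@4 → rd(y)@1, contradicting antisymmetry. -/

import Mathlib

/-! A trace without releases has no RAD edges, so happens-before only relates events of the
same thread. Each write of the trace is then unsynchronized with the read of the other thread,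
and, being the only write on its variable, is that read's unique WRD candidate. -/

/-- Operations an event can perform: read/write on a shared variable,
    acquire/release on a mutex. Variables and mutexes are named by naturals. -/
inductive Op : Type where
  | read : ℕ → Op
  | write : ℕ → Op
  | acq : ℕ → Op
  | rel : ℕ → Op
deriving DecidableEq

/-- An event carries a thread identifier, a trace position and an operation. -/
structure Event : Type where
  tid : ℕ
  pos : ℕ
  op : Op
deriving DecidableEq

/-- A trace is well formed if the recorded position of each event equals its index. -/
def WellFormed (T : List Event) : Prop :=
  ∀ i : Fin T.length, (T.get i).pos = (i : ℕ)

/-- Program-order edge: same thread, earlier position. -/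
def POEdge (T : List Event) (e f : Event) : Prop :=
  e ∈ T ∧ f ∈ T ∧ e.tid = f.tid ∧ e.pos < f.pos

/-- Release-acquire edge: a release of mutex `y` before an acquire of `y` in another
    thread, with no intervening acquire of `y` by a thread other than the releasing one. -/
def RADEdge (T : List Event) (e f : Event) : Prop :=
  e ∈ T ∧ f ∈ T ∧ ∃ y, e.op = Op.rel y ∧ f.op = Op.acq y ∧
    e.tid ≠ f.tid ∧ e.pos < f.pos ∧
    ∀ g ∈ T, e.pos < g.pos → g.pos < f.pos → g.tid ≠ e.tid → g.op ≠ Op.acq y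

/-- The happens-before relation: smallest (strict) partial order containing PO and RAD,
    i.e. the transitive closure of the PO and RAD edges. -/
def HB (T : List Event) : Event → Event → Prop :=
  Relation.TransGen (fun e f => POEdge T e f ∨ RADEdge T e f)

/-- Two events are unsynchronized if neither happens before the other. -/
def Unsync (T : List Event) (e f : Event) : Prop := ¬ HB T e f ∧ ¬ HB T f e

/-- Unsynchronized WRD candidates for the read `r` on variable `x`. -/
def W1 (T : List Event) (x : ℕ) (r : Event) : Set Event :=
  {w | w ∈ T ∧ w.op = Op.write x ∧ Unsync T r w ∧
    ∀ w' ∈ T, w' ≠ w → w'.op = Op.write x → Unsync T r w' → ¬ HB T w w'}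

/-- Synchronized WRD candidates for the read `r` on variable `x`. -/
def W2 (T : List Event) (x : ℕ) (r : Event) : Set Event :=
  {w | w ∈ T ∧ w.op = Op.write x ∧ HB T w r ∧
    ∀ w' ∈ T, w' ≠ w → w'.op = Op.write x → HB T w' r → ¬ HB T w w'}

/-- All WRD candidates. -/
def Wcand (T : List Event) (x : ℕ) (r : Event) : Set Event :=
  W1 T x r ∪ W2 T x r

/-- Write-read dependency edge: the nearest preceding write on the same variable. -/
def WRDEdge (T : List Event) (w r : Event) : Prop :=
  w ∈ T ∧ r ∈ T ∧ ∃ x, w.op = Op.write x ∧ r.op = Op.read x ∧ w.pos < r.pos ∧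
    ∀ g ∈ T, w.pos < g.pos → g.pos < r.pos → g.op ≠ Op.write x

/-- The schedulable happens-before relation: smallest partial order containing
    PO, RAD and WRD edges. -/
def SHB (T : List Event) : Event → Event → Prop :=
  Relation.TransGen (fun e f => POEdge T e f ∨ RADEdge T e f ∨ WRDEdge T e f)

/-- Every read event enjoys an initial write. -/
def InitialWrites (T : List Event) : Prop :=
  ∀ r ∈ T, ∀ x, r.op = Op.read x → (W2 T x r).Nonempty

/-- A some-schedulable happens-before relation: any (strict) partial order satisfying
    PO and RAD such that every read is preceded by some of its WRD candidates. -/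
structure SomeSHB (T : List Event) (R : Event → Event → Prop) : Prop where
  trans : ∀ {a b c : Event}, R a b → R b c → R a c
  irrefl : ∀ a : Event, ¬ R a a
  po : ∀ {e f : Event}, POEdge T e f → R e f
  rad : ∀ {e f : Event}, RADEdge T e f → R e f
  wrd : ∀ r ∈ T, ∀ x, r.op = Op.read x → ∃ w ∈ Wcand T x r, R w r

/-- A WRD-candidate edge of the graph derived from `T` (labelled `W(r)`). -/
def CandEdge (T : List Event) (w r : Event) : Prop :=
  r ∈ T ∧ ∃ x, r.op = Op.read x ∧ w ∈ Wcand T x r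

/-- An edge of the graph derived from `T`: an HB edge or a WRD-candidate edge. -/
def GEdge (T : List Event) (e f : Event) : Prop :=
  HB T e f ∨ CandEdge T e f

/-- A path in the graph derived from `T`: a nonempty sequence of edges
    visiting pairwise distinct nodes. -/
def GPath (T : List Event) (e f : Event) : Prop :=
  ∃ (n : ℕ) (p : Fin (n + 1) → Event), 0 < n ∧ Function.Injective p ∧
    p 0 = e ∧ p (Fin.last n) = f ∧
    ∀ i : Fin n, GEdge T (p i.castSucc) (p i.succ)

def ReleaseFree (T : List Event) : Prop :=
  ∀ e ∈ T, ∀ y, e.op ≠ Op.rel y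

theorem HB.tid_eq_of_releaseFree {T : List Event} (hT : ReleaseFree T) {e f : Event}
    (h : HB T e f) : e.tid = f.tid := by
  have edge_tid : ∀ {a b : Event}, POEdge T a b ∨ RADEdge T a b → a.tid = b.tid := by
    rintro a b (⟨-, -, htid, -⟩ | ⟨ha, -, y, hrel, -⟩)
    · exact htid
    · exact absurd hrel (hT a ha y)
  induction h with
  | single hab => exact edge_tid hab
  | tail _ hbc ih => exact ih.trans (edge_tid hbc)

theorem unsync_of_tid_ne {T : List Event} (hT : ReleaseFree T) {e f : Event}
    (htid : e.tid ≠ f.tid) : Unsync T e f :=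
  ⟨fun h => htid (h.tid_eq_of_releaseFree hT),
    fun h => htid (h.tid_eq_of_releaseFree hT).symm⟩

theorem wcand_eq_singleton_of_unique_write {T : List Event} {x : ℕ} {r w : Event}
    (hw : w ∈ T) (hwx : w.op = Op.write x) (hunique : ∀ w' ∈ T, w'.op = Op.write x → w' = w)
    (hrw : Unsync T r w) : Wcand T x r = {w} := by
  refine Set.Subset.antisymm ?_ (Set.singleton_subset_iff.2 (Or.inl ?_))
  · rintro w' (⟨hw', hw'x, -⟩ | ⟨hw', hw'x, -⟩) <;> exact hunique w' hw' hw'x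
  · exact ⟨hw, hwx, hrw, fun w' hw' hne hw'x _ => absurd (hunique w' hw' hw'x) hne⟩

/-- there is a trace for which no strong schedulable happens-before
    relation exists: for the concrete trace
    `[1:rd(y), 1:wr(x), 2:rd(x), 2:wr(y)]` (with `x = 0`, `y = 1`) we have
    `W(rd y) = {wr y}` and `W(rd x) = {wr x}`, and no partial order satisfies
    PO, RAD and StrongWRD. -/
theorem stmt12 :
    ∃ T : List Event,
      T = [⟨1, 0, Op.read 1⟩, ⟨1, 1, Op.write 0⟩, ⟨2, 2, Op.read 0⟩, ⟨2, 3, Op.write 1⟩] ∧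
      WellFormed T ∧
      Wcand T 1 ⟨1, 0, Op.read 1⟩ = {⟨2, 3, Op.write 1⟩} ∧
      Wcand T 0 ⟨2, 2, Op.read 0⟩ = {⟨1, 1, Op.write 0⟩} ∧
      ¬ ∃ R : Event → Event → Prop,
          (∀ a b c : Event, R a b → R b c → R a c) ∧
          (∀ a : Event, ¬ R a a) ∧
          (∀ e f : Event, POEdge T e f → R e f) ∧
          (∀ e f : Event, RADEdge T e f → R e f) ∧
          (∀ r ∈ T, ∀ x, r.op = Op.read x → ∀ w ∈ Wcand T x r, R w r) := by
  set T : List Event :=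
    [⟨1, 0, Op.read 1⟩, ⟨1, 1, Op.write 0⟩, ⟨2, 2, Op.read 0⟩, ⟨2, 3, Op.write 1⟩]
  have hfree : ReleaseFree T := by simp [ReleaseFree, T]
  have hWy : Wcand T 1 ⟨1, 0, Op.read 1⟩ = {⟨2, 3, Op.write 1⟩} :=
    wcand_eq_singleton_of_unique_write (by decide) rfl (by decide)
      (unsync_of_tid_ne hfree (by decide))
  have hWx : Wcand T 0 ⟨2, 2, Op.read 0⟩ = {⟨1, 1, Op.write 0⟩} :=
    wcand_eq_singleton_of_unique_write (by decide) rfl (by decide)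
      (unsync_of_tid_ne hfree (by decide))
  refine ⟨T, rfl, by unfold WellFormed; decide, hWy, hWx, ?_⟩
  rintro ⟨R, htrans, hirrefl, hpo, -, hwrd⟩
  have rdy_wrx : R ⟨1, 0, Op.read 1⟩ ⟨1, 1, Op.write 0⟩ :=
    hpo _ _ ⟨by decide, by decide, rfl, by decide⟩
  have wrx_rdx : R ⟨1, 1, Op.write 0⟩ ⟨2, 2, Op.read 0⟩ :=
    hwrd _ (by decide) 0 rfl _ (hWx ▸ rfl)
  have rdx_wry : R ⟨2, 2, Op.read 0⟩ ⟨2, 3, Op.write 1⟩ :=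
    hpo _ _ ⟨by decide, by decide, rfl, by decide⟩
  have wry_rdy : R ⟨2, 3, Op.write 1⟩ ⟨1, 0, Op.read 1⟩ :=
    hwrd _ (by decide) 1 rfl _ (hWy ▸ rfl)
  exact hirrefl _ (htrans _ _ _ (htrans _ _ _ (htrans _ _ _ rdy_wrx wrx_rdx) rdx_wry) wry_rdy)
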